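/- Let γ > 0 and t ∈ [0,1], and define φ_t(z) = t·z^{1+γ} + (1−t)·z for z ≥ 0. Then: (a) φ_t is strictly increasing and convex on [0,∞), with φ_t(1) = 1 and φ_t'(z) = t(1+γ)z^γ + (1−t); (b) for all probability densities p, q with 0 < ‖p‖_{1+γ} < ∞ and ⟨q p^γ⟩ < ∞, the norm-based Bregman density power cross-entropy with φ_t equals the convex combination of the density power and pseudo-spherical cross-entropies: −(φ_t(‖p‖_{1+γ}) − 1)/γ − φ_t'(‖p‖_{1+γ})·(⟨q p^γ⟩ − ⟨p^{1+γ}⟩)/(γ·‖p‖_{1+γ}^γ) = t·d^{DP}_γ(q,p) + (1−t)·d^{PS}_γ(q,p). -/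

import Mathlib

open MeasureTheory Filter Real Topology Set

/-!
`φ_t` is a convex combination of the convex increasing maps `z ↦ z^{1+γ}` and `z ↦ z`.
For (b), write `N = ‖p‖_{1+γ}`: then `⟨p^{1+γ}⟩ = N^{1+γ} = N · N^γ`, and both sides become
rational expressions in `N`, `N^γ` and `⟨q p^γ⟩` that agree identically.
-/

/-- A probability density w.r.t. a measure `ν`: measurable, nonnegative, integrating to 1. -/
def IsProbDensity {X : Type*} [MeasurableSpace X] (ν : Measure X) (p : X → ℝ) : Prop :=
  Measurable p ∧ (∀ x, 0 ≤ p x) ∧ ∫ x, p x ∂ν = 1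

/-- `⟨f^{1+γ}⟩ = ∫ f(x)^{1+γ} dν`. -/
noncomputable def powInt {X : Type*} [MeasurableSpace X] (ν : Measure X) (γ : ℝ) (p : X → ℝ) : ℝ :=
  ∫ x, p x ^ (1 + γ) ∂ν

/-- `⟨q p^γ⟩ = ∫ q(x) p(x)^γ dν`. -/
noncomputable def crossInt {X : Type*} [MeasurableSpace X] (ν : Measure X) (γ : ℝ)
    (q p : X → ℝ) : ℝ :=
  ∫ x, q x * p x ^ γ ∂ν

/-- `‖f‖_{1+γ} = ⟨f^{1+γ}⟩^{1/(1+γ)}`. -/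
noncomputable def lnorm {X : Type*} [MeasurableSpace X] (ν : Measure X) (γ : ℝ) (p : X → ℝ) : ℝ :=
  (powInt ν γ p) ^ (1 / (1 + γ))


/-- The density power cross-entropy (DPCE). -/
noncomputable def dDP {X : Type*} [MeasurableSpace X] (ν : Measure X) (γ : ℝ)
    (q p : X → ℝ) : ℝ :=
  -((1 + γ) / γ) * crossInt ν γ q p + 1 / γ + powInt ν γ p

/-- The pseudo-spherical cross-entropy (PSCE). -/
noncomputable def dPS {X : Type*} [MeasurableSpace X] (ν : Measure X) (γ : ℝ)
    (q p : X → ℝ) : ℝ :=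
  -(1 / γ) * (crossInt ν γ q p / lnorm ν γ p ^ γ) + 1 / γ

section MixedPower

variable {t γ : ℝ}

theorem hasDerivAt_mixedPower (hγ : 0 ≤ γ) (z : ℝ) :
    HasDerivAt (fun z : ℝ => t * z ^ (1 + γ) + (1 - t) * z)
      (t * (1 + γ) * z ^ γ + (1 - t)) z := by
  have hpow : HasDerivAt (fun z : ℝ => z ^ (1 + γ)) ((1 + γ) * z ^ γ) z := by
    simpa using Real.hasDerivAt_rpow_const (x := z) (p := 1 + γ) (Or.inr (by linarith))
  exact ((hpow.const_mul t).fun_add ((hasDerivAt_id' z).const_mul (1 - t))).congr_deriv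
    (by ring)

theorem strictMonoOn_mixedPower (hγ : 0 ≤ γ) (ht0 : 0 ≤ t) (ht1 : t ≤ 1) :
    StrictMonoOn (fun z : ℝ => t * z ^ (1 + γ) + (1 - t) * z) (Ici 0) := by
  refine strictMonoOn_of_deriv_pos (convex_Ici 0) ?_ fun x hx => ?_
  · exact (continuous_const.mul (continuous_id.rpow_const fun _ => Or.inr (by linarith))).add
      (continuous_const.mul continuous_id) |>.continuousOn
  rw [interior_Ici, mem_Ioi] at hx
  rw [(hasDerivAt_mixedPower hγ x).deriv]
  have hxγ : 0 < x ^ γ := rpow_pos_of_pos hx γ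
  rcases ht1.lt_or_eq with ht1 | rfl
  · have : 0 ≤ t * (1 + γ) * x ^ γ := by positivity
    linarith
  · simp only [one_mul, sub_self, add_zero]
    positivity

theorem convexOn_mixedPower (hγ : 0 ≤ γ) (ht0 : 0 ≤ t) (ht1 : t ≤ 1) :
    ConvexOn ℝ (Ici 0) (fun z : ℝ => t * z ^ (1 + γ) + (1 - t) * z) :=
  ((convexOn_rpow (by linarith)).smul ht0).add
    ((convexOn_id (convex_Ici 0)).smul (sub_nonneg.mpr ht1))

theorem mixedPower_bregman_eq (hγ : γ ≠ 0) {N A : ℝ} (hN : 0 < N) :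
    -(t * N ^ (1 + γ) + (1 - t) * N - 1) / γ -
        (t * (1 + γ) * N ^ γ + (1 - t)) * (A - N ^ (1 + γ)) / (γ * N ^ γ) =
      t * (-((1 + γ) / γ) * A + 1 / γ + N ^ (1 + γ)) +
        (1 - t) * (-(1 / γ) * (A / N ^ γ) + 1 / γ) := by
  have : 0 < N ^ γ := rpow_pos_of_pos hN γ
  rw [rpow_add hN, rpow_one]
  field_simp
  ring

end MixedPower

theorem lnorm_rpow_one_add {X : Type*} [MeasurableSpace X] {ν : Measure X} {γ : ℝ}
    {p : X → ℝ} (hP : 0 ≤ powInt ν γ p) (hγ : 1 + γ ≠ 0) :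
    lnorm ν γ p ^ (1 + γ) = powInt ν γ p := by
  rw [lnorm, ← rpow_mul hP, one_div, inv_mul_cancel₀ hγ, rpow_one]

theorem nbdpce_mixture_dp_ps_general {X : Type*} [MeasurableSpace X] (ν : Measure X)
    (γ t : ℝ) (hγ : 0 < γ) (ht0 : 0 ≤ t) (ht1 : t ≤ 1) :
    let φ : ℝ → ℝ := fun z => t * z ^ (1 + γ) + (1 - t) * z
    (StrictMonoOn φ (Set.Ici 0) ∧ ConvexOn ℝ (Set.Ici 0) φ ∧ φ 1 = 1 ∧
      ∀ z : ℝ, 0 ≤ z → HasDerivAt φ (t * (1 + γ) * z ^ γ + (1 - t)) z) ∧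
    ∀ p q : X → ℝ, IsProbDensity ν p → IsProbDensity ν q →
      0 < powInt ν γ p → Integrable (fun x => p x ^ (1 + γ)) ν →
      Integrable (fun x => q x * p x ^ γ) ν →
      -(φ (lnorm ν γ p) - 1) / γ -
          deriv φ (lnorm ν γ p) * (crossInt ν γ q p - powInt ν γ p) / (γ * lnorm ν γ p ^ γ) =
        t * dDP ν γ q p + (1 - t) * dPS ν γ q p := by
  intro φ
  refine ⟨⟨strictMonoOn_mixedPower hγ.le ht0 ht1, convexOn_mixedPower hγ.le ht0 ht1,
    by norm_num [φ], fun z _ => hasDerivAt_mixedPower hγ.le z⟩, fun p q _ _ hP _ _ => ?_⟩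
  rw [(hasDerivAt_mixedPower hγ.le _).deriv, dDP, dPS,
    ← lnorm_rpow_one_add hP.le (by linarith)]
  exact mixedPower_bregman_eq hγ.ne' (rpow_pos_of_pos hP _)

/-- with `φ_t(z) = t z^{1+γ} + (1−t) z`: (a) `φ_t` is strictly increasing and
convex on `[0,∞)`, `φ_t(1) = 1`, and `φ_t'(z) = t(1+γ)z^γ + (1−t)` for `z ≥ 0`; (b) the
NB-DPCE with `φ_t` is the convex combination of the density power and pseudo-spherical
cross-entropies. -/
theorem nbdpce_mixture_dp_ps {X : Type*} [MeasurableSpace X] (ν : Measure X) [SigmaFinite ν]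
    (γ t : ℝ) (hγ : 0 < γ) (ht0 : 0 ≤ t) (ht1 : t ≤ 1) :
    let φ : ℝ → ℝ := fun z => t * z ^ (1 + γ) + (1 - t) * z
    (StrictMonoOn φ (Set.Ici 0) ∧ ConvexOn ℝ (Set.Ici 0) φ ∧ φ 1 = 1 ∧
      ∀ z : ℝ, 0 ≤ z → HasDerivAt φ (t * (1 + γ) * z ^ γ + (1 - t)) z) ∧
    ∀ p q : X → ℝ, IsProbDensity ν p → IsProbDensity ν q →
      0 < powInt ν γ p → Integrable (fun x => p x ^ (1 + γ)) ν →
      Integrable (fun x => q x * p x ^ γ) ν →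
      -(φ (lnorm ν γ p) - 1) / γ -
          deriv φ (lnorm ν γ p) * (crossInt ν γ q p - powInt ν γ p) / (γ * lnorm ν γ p ^ γ) =
        t * dDP ν γ q p + (1 - t) * dPS ν γ q p :=
  nbdpce_mixture_dp_ps_general ν γ t hγ ht0 ht1
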